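/- arXiv:1302.4618 — 2 statements merged into one kernel-verified Lean document; each statement's English description precedes it below -/
import Mathlib

section
/- Let Φ = {φ_n}_{n=1}^N ⊆ ℂ³ and let 𝐀 : ℍ^{3×3} → ℝ^N be the super analysis operator 𝐀H = (⟨H, φ_n φ_n*⟩_HS)_n. If the null space of 𝐀 has real dimension at least 2, then the intensity measurement map A(x) = (|⟨x,φ_n⟩|²)_n is not injective modulo 𝕋. -/
/-!
A nonzero Hermitian matrix `M` of rank at most two with `star φₙ ⬝ᵥ M *ᵥ φₙ = 0` for all `n`
witnesses non-injectivity. If `M` is semidefinite, every `φₙ` lies in its kernel, so a nonzero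
vector `w` in its range has the same intensities as `0`. Otherwise `M = x x* - y y*`, so `x` and `y`
have the same intensities, while `x x* ≠ y y*` rules out `y = c • x` with `‖c‖ = 1`.

Such an `M` lies in the span of `A` and `B`: `det (cos t • A + sin t • B)` is real, and as `3` is
odd it takes opposite values at `t = 0` and `t = π`, so it vanishes at some `t`. The resulting
singular Hermitian matrix is nonzero by linear independence, hence of rank one or two.
-/

open Matrix

open scoped ComplexOrder

namespace Matrix

variable {𝕜 : Type*} [RCLike 𝕜] {n : Type*} {A B : Matrix n n 𝕜}

lemma vecMulVec_smul_star_smul {c : 𝕜} (hc : ‖c‖ = 1) (x : n → 𝕜) :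
    vecMulVec (c • x) (star (c • x)) = vecMulVec x (star x) := by
  rw [star_smul, smul_vecMulVec, vecMulVec_smul, smul_smul, RCLike.star_def, RCLike.mul_conj, hc]
  simp

lemma vecMulVec_real_smul_star (r : ℝ) (hr : 0 ≤ r) (x : n → 𝕜) :
    r • vecMulVec x (star x) = vecMulVec (√r • x) (star (√r • x)) := by
  rw [star_smul, star_trivial √r, smul_vecMulVec, vecMulVec_smul, smul_smul,
    Real.mul_self_sqrt hr]

lemma IsHermitian.cos_smul_add_sin_smul (hA : A.IsHermitian) (hB : B.IsHermitian) (t : ℝ) :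
    (Real.cos t • A + Real.sin t • B).IsHermitian :=
  (hA.smul (.all _)).add (hB.smul (.all _))

variable [Fintype n]

lemma trace_vecMulVec_star_mul (u : n → 𝕜) (M : Matrix n n 𝕜) :
    (vecMulVec u (star u) * M).trace = star u ⬝ᵥ (M *ᵥ u) := by
  rw [vecMulVec_mul, trace_vecMulVec, dotProduct_comm, dotProduct_mulVec]

lemma star_dotProduct_vecMulVec_mulVec (u x : n → 𝕜) :
    star u ⬝ᵥ (vecMulVec x (star x) *ᵥ u) = (‖star u ⬝ᵥ x‖ ^ 2 : 𝕜) := by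
  rw [vecMulVec_mulVec, op_smul_eq_smul, dotProduct_smul, star_dotProduct x u, smul_eq_mul]
  exact RCLike.conj_mul _

variable [DecidableEq n]

lemma IsHermitian.eq_sum_eigenvalues_smul_vecMulVec (hA : A.IsHermitian) :
    A = ∑ i, hA.eigenvalues i •
      vecMulVec ⇑(hA.eigenvectorBasis i) (star ⇑(hA.eigenvectorBasis i)) := by
  conv_lhs => rw [hA.spectral_theorem]
  ext a b
  simp only [Unitary.conjStarAlgAut_apply, mul_apply, eigenvectorUnitary_apply, diagonal_apply,
    Function.comp_apply, mul_ite, mul_zero, Finset.sum_ite_eq', Finset.mem_univ, ↓reduceIte,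
    star_apply, RCLike.star_def, sum_apply, smul_apply, vecMulVec_apply, Pi.star_apply,
    RCLike.real_smul_eq_coe_mul]
  exact Finset.sum_congr rfl fun _ _ ↦ by ring

lemma IsHermitian.posSemidef_neg_of_eigenvalues_nonpos (hA : A.IsHermitian)
    (h : ∀ i, hA.eigenvalues i ≤ 0) : (-A).PosSemidef := by
  rw [hA.eq_sum_eigenvalues_smul_vecMulVec, ← Finset.sum_neg_distrib]
  exact posSemidef_sum _ fun i _ ↦ by
    rw [← neg_smul]
    exact (posSemidef_vecMulVec_self_star _).smul (neg_nonneg.mpr (h i))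

lemma IsHermitian.exists_eq_vecMulVec_sub_vecMulVec (hA : A.IsHermitian) (hrank : A.rank ≤ 2)
    {p q : n} (hp : 0 < hA.eigenvalues p) (hq : hA.eigenvalues q < 0) :
    ∃ x y : n → 𝕜, A = vecMulVec x (star x) - vecMulVec y (star y) := by
  have hpq : p ≠ q := by rintro rfl; linarith
  have hzero : ∀ i, i ≠ p ∧ i ≠ q → hA.eigenvalues i = 0 := by
    rintro i ⟨hip, hiq⟩
    by_contra hi
    have : ({p, q, i} : Finset n).card ≤ 2 := by
      rw [hA.rank_eq_card_non_zero_eigs, Fintype.card_subtype] at hrank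
      refine le_trans (Finset.card_le_card fun j hj ↦ ?_) hrank
      simp only [Finset.mem_insert, Finset.mem_singleton] at hj
      rcases hj with rfl | rfl | rfl <;> simp [hp.ne', hq.ne, hi]
    rw [Finset.card_insert_of_notMem (by simp [hpq, hip.symm]),
      Finset.card_pair hiq.symm] at this
    omega
  set v := fun i ↦ ⇑(hA.eigenvectorBasis i)
  refine ⟨√(hA.eigenvalues p) • v p, √(-hA.eigenvalues q) • v q, ?_⟩
  rw [← vecMulVec_real_smul_star _ hp.le, ← vecMulVec_real_smul_star _ (neg_nonneg.mpr hq.le),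
    neg_smul, sub_neg_eq_add]
  conv_lhs => rw [hA.eq_sum_eigenvalues_smul_vecMulVec]
  exact Fintype.sum_eq_add p q hpq fun i hi ↦ by simp [hzero i hi]

lemma IsHermitian.rank_lt_card_of_det_eq_zero (hA : A.IsHermitian) (hdet : A.det = 0) :
    A.rank < Fintype.card n := by
  rw [hA.det_eq_prod_eigenvalues, Finset.prod_eq_zero_iff] at hdet
  obtain ⟨k, -, hk⟩ := hdet
  rw [hA.rank_eq_card_non_zero_eigs]
  exact Fintype.card_subtype_lt (x := k) (by simpa using hk)

theorem exists_det_cos_smul_add_sin_smul_eq_zero (hn : Odd (Fintype.card n))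
    (hA : A.IsHermitian) (hB : B.IsHermitian) :
    ∃ t : ℝ, (Real.cos t • A + Real.sin t • B).det = 0 := by
  set f : ℝ → ℝ := fun t ↦ RCLike.re (Real.cos t • A + Real.sin t • B).det
  have hf : Continuous f := by fun_prop
  have hfπ : f Real.pi = -f 0 := by
    simp [f, det_neg, hn.neg_one_pow]
  obtain ⟨t, -, ht⟩ : (0 : ℝ) ∈ f '' Set.uIcc 0 Real.pi :=
    intermediate_value_uIcc hf.continuousOn (by
      rw [hfπ, Set.mem_uIcc]; rcases le_total 0 (f 0) with h | h <;> simp [h])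
  refine ⟨t, ?_⟩
  have hM := hA.cos_smul_add_sin_smul hB t
  simp only [f] at ht
  rw [hM.det_eq_prod_eigenvalues] at ht ⊢
  exact_mod_cast ht

end Matrix

lemma LinearIndependent.cos_smul_add_sin_smul_ne_zero {M : Type*} [AddCommGroup M] [Module ℝ M]
    {u v : M} (h : LinearIndependent ℝ ![u, v]) (t : ℝ) : Real.cos t • u + Real.sin t • v ≠ 0 := by
  intro h0
  obtain ⟨hc, hs⟩ := LinearIndependent.pair_iff.mp h _ _ h0
  simpa [hc, hs] using Real.sin_sq_add_cos_sq t

def IsInjectiveModPhase {ι 𝕜 n : Type*} [RCLike 𝕜] [Fintype n] (Φ : ι → n → 𝕜) : Prop :=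
  ∀ x y : n → 𝕜, (∀ i, ‖star (Φ i) ⬝ᵥ x‖ ^ 2 = ‖star (Φ i) ⬝ᵥ y‖ ^ 2) →
    ∃ c : 𝕜, ‖c‖ = 1 ∧ y = c • x

section IsInjectiveModPhase

variable {ι 𝕜 n : Type*} [RCLike 𝕜] [Fintype n] {Φ : ι → n → 𝕜}

theorem not_isInjectiveModPhase_of_forall_dotProduct_eq_zero {w : n → 𝕜} (hw : w ≠ 0)
    (h : ∀ i, star (Φ i) ⬝ᵥ w = 0) : ¬ IsInjectiveModPhase Φ := by
  intro hinj
  obtain ⟨c, hc, hwc⟩ := hinj w 0 (by simp [h])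
  have hc0 : c ≠ 0 := by rintro rfl; simp at hc
  exact hw ((smul_eq_zero_iff_right hc0).mp hwc.symm)

theorem not_isInjectiveModPhase_of_vecMulVec_sub {x y : n → 𝕜}
    (hxy : vecMulVec x (star x) ≠ vecMulVec y (star y))
    (h : ∀ i, star (Φ i) ⬝ᵥ ((vecMulVec x (star x) - vecMulVec y (star y)) *ᵥ Φ i) = 0) :
    ¬ IsInjectiveModPhase Φ := by
  intro hinj
  obtain ⟨c, hc, rfl⟩ := hinj x y fun i ↦ by
    have := h i
    rw [sub_mulVec, dotProduct_sub, star_dotProduct_vecMulVec_mulVec,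
      star_dotProduct_vecMulVec_mulVec, sub_eq_zero] at this
    exact_mod_cast this
  exact hxy (vecMulVec_smul_star_smul hc x).symm

theorem not_isInjectiveModPhase_of_posSemidef {M : Matrix n n 𝕜} (hM : M.PosSemidef)
    (hM0 : M ≠ 0) (h : ∀ i, star (Φ i) ⬝ᵥ (M *ᵥ Φ i) = 0) : ¬ IsInjectiveModPhase Φ := by
  classical
  obtain ⟨u, hu⟩ : ∃ u, M *ᵥ u ≠ 0 := by
    by_contra! hM'
    exact hM0 (ext_of_mulVec_single fun j ↦ by rw [hM', zero_mulVec])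
  refine not_isInjectiveModPhase_of_forall_dotProduct_eq_zero hu fun i ↦ ?_
  rw [dotProduct_mulVec, ← hM.isHermitian.eq, ← star_mulVec,
    (hM.dotProduct_mulVec_zero_iff _).mp (h i), star_zero, zero_dotProduct]

theorem not_isInjectiveModPhase_of_isHermitian_of_rank_le_two [DecidableEq n]
    {M : Matrix n n 𝕜} (hM : M.IsHermitian) (hM0 : M ≠ 0) (hrank : M.rank ≤ 2)
    (h : ∀ i, star (Φ i) ⬝ᵥ (M *ᵥ Φ i) = 0) : ¬ IsInjectiveModPhase Φ := by
  by_cases hpos : ∀ j, 0 ≤ hM.eigenvalues j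
  · exact not_isInjectiveModPhase_of_posSemidef
      (hM.posSemidef_iff_eigenvalues_nonneg.mpr hpos) hM0 h
  by_cases hneg : ∀ j, hM.eigenvalues j ≤ 0
  · exact not_isInjectiveModPhase_of_posSemidef (hM.posSemidef_neg_of_eigenvalues_nonpos hneg)
      (neg_ne_zero.mpr hM0) (by simpa [neg_mulVec] using h)
  push Not at hpos hneg
  obtain ⟨p, hp⟩ := hneg
  obtain ⟨q, hq⟩ := hpos
  obtain ⟨x, y, rfl⟩ := hM.exists_eq_vecMulVec_sub_vecMulVec hrank hp hq
  exact not_isInjectiveModPhase_of_vecMulVec_sub (sub_ne_zero.mp hM0) h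

end IsInjectiveModPhase

theorem stmt_11 (N : ℕ) (Φ : Fin N → Fin 3 → ℂ)
    (A B : Matrix (Fin 3) (Fin 3) ℂ)
    (hA : A.IsHermitian) (hB : B.IsHermitian)
    (hli : LinearIndependent ℝ ![A, B])
    (hAnull : ∀ n, (Matrix.vecMulVec (Φ n) (star (Φ n)) * A).trace = 0)
    (hBnull : ∀ n, (Matrix.vecMulVec (Φ n) (star (Φ n)) * B).trace = 0) :
    ¬ ∀ x y : Fin 3 → ℂ,
        (∀ n, ‖star (Φ n) ⬝ᵥ x‖ ^ 2 = ‖star (Φ n) ⬝ᵥ y‖ ^ 2) →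
        ∃ c : ℂ, ‖c‖ = 1 ∧ y = c • x := by
  obtain ⟨t, hdet⟩ := exists_det_cos_smul_add_sin_smul_eq_zero (by decide) hA hB
  have hM := hA.cos_smul_add_sin_smul hB t
  refine not_isInjectiveModPhase_of_isHermitian_of_rank_le_two hM
    (hli.cos_smul_add_sin_smul_ne_zero t)
    (Nat.le_of_lt_succ (hM.rank_lt_card_of_det_eq_zero hdet)) fun n ↦ ?_
  rw [← trace_vecMulVec_star_mul, mul_add, trace_add, mul_smul_comm, mul_smul_comm, trace_smul,
    trace_smul, hAnull, hBnull, smul_zero, smul_zero, add_zero]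
end

section
/- Let Φ = {φ_n}_{n=1}^N ⊆ ℂ^M yield intensity measurements A(x) = (|⟨x,φ_n⟩|²)_n that are injective modulo 𝕋. For θ ∈ ℂ^M, let Ψ(θ) be the 2M×N real matrix whose n-th column stacks the real and imaginary parts of ⟨θ,φ_n⟩φ_n, and let J(θ) = (4/σ²)Ψ(θ)Ψ(θ)ᵀ. If θ ∈ ℂ^M has its M-th coordinate real and strictly positive, then the (2M-1)×(2M-1) submatrix of J(θ) obtained by deleting the last row and column is positive definite. -/
/-!
A vector `x` with `xᵀ Ψ'(θ) = 0`, where `Ψ'(θ)` is `Ψ(θ)` without its last row, is padded by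
a zero and read as `z ∈ ℂ^M`; then `Re(⟨θ, φ_n⟩ conj ⟨z, φ_n⟩) = 0`, i.e.
`|⟨θ + z, φ_n⟩| = |⟨θ - z, φ_n⟩|` for all `n`. Injectivity modulo phase gives
`θ - z = c (θ + z)` with `|c| = 1`, so `z = i t θ` for a real `t` (a Cayley transform of `c`).
The padded coordinate is `Im z_M = t Re θ_M`, forcing `t = 0`. Thus `Ψ'(θ)ᵀ` is injective and
`J(θ)` truncated is a positive multiple of the Gram matrix `Ψ' Ψ'ᵀ`.
-/

open Matrix

/-- The `2M × N` real matrix `Ψ(θ)` whose `n`-th column stacks the real and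
imaginary parts of `⟨θ, φ_n⟩ φ_n`. -/
noncomputable def Psi {M N : ℕ} (Φ : Fin N → Fin M → ℂ) (θ : Fin M → ℂ) :
    Fin (2 * M) → Fin N → ℝ := fun i n =>
  if h : (i : ℕ) < M then ((θ ⬝ᵥ star (Φ n)) * Φ n ⟨i, h⟩).re
  else ((θ ⬝ᵥ star (Φ n)) * Φ n ⟨(i : ℕ) - M, by have := i.isLt; omega⟩).im

open ComplexConjugate

def realify {M : ℕ} (z : Fin M → ℂ) : Fin (2 * M) → ℝ := fun i =>
  if h : (i : ℕ) < M then (z ⟨i, h⟩).re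
  else (z ⟨(i : ℕ) - M, by have := i.isLt; omega⟩).im

section realify

variable {M : ℕ}

@[simp]
lemma realify_zero : realify (0 : Fin M → ℂ) = 0 := by
  ext i
  simp [realify]

lemma realify_last (hM : 0 < M) (z : Fin M → ℂ) :
    realify z ⟨2 * M - 1, by omega⟩ = (z ⟨M - 1, Nat.sub_lt hM one_pos⟩).im := by
  have hlast : ¬ 2 * M - 1 < M := by omega
  simp only [realify, dif_neg hlast]
  congr 3
  omega

lemma exists_realify_eq (y : Fin (2 * M) → ℝ) : ∃ z : Fin M → ℂ, realify z = y := by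
  refine ⟨fun j => ⟨y ⟨j, by omega⟩, y ⟨M + j, by omega⟩⟩, funext fun i => ?_⟩
  unfold realify
  split_ifs with hi
  · rfl
  · simp only
    congr
    omega

lemma realify_dotProduct_realify (w z : Fin M → ℂ) :
    realify w ⬝ᵥ realify z = (w ⬝ᵥ star z).re := by
  rw [dotProduct, ← (finCongr (two_mul M)).symm.sum_comp, Fin.sum_univ_add]
  simp [realify, dotProduct, Complex.re_sum, Finset.sum_add_distrib]

end realify

lemma Psi_col_eq_realify {M N : ℕ} (Φ : Fin N → Fin M → ℂ) (θ : Fin M → ℂ) (n : Fin N) :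
    (fun i => Psi Φ θ i n) = realify fun j => (θ ⬝ᵥ star (Φ n)) * Φ n j :=
  rfl

lemma realify_dotProduct_Psi {M N : ℕ} (Φ : Fin N → Fin M → ℂ) (θ z : Fin M → ℂ) (n : Fin N) :
    realify z ⬝ᵥ (fun i => Psi Φ θ i n) = ((star (Φ n) ⬝ᵥ θ) * conj (star (Φ n) ⬝ᵥ z)).re := by
  rw [Psi_col_eq_realify, dotProduct_comm, realify_dotProduct_realify, dotProduct_comm θ]
  simp [dotProduct, Finset.mul_sum, mul_assoc]

lemma norm_add_sq_eq_norm_sub_sq {p q : ℂ} (h : (p * conj q).re = 0) :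
    ‖p + q‖ ^ 2 = ‖p - q‖ ^ 2 := by
  simp only [Complex.sq_norm, Complex.normSq_add, Complex.normSq_sub, h, mul_zero, add_zero,
    sub_zero]

lemma re_one_sub_div_one_add_eq_zero {c : ℂ} (hc : ‖c‖ = 1) : ((1 - c) / (1 + c)).re = 0 := by
  have hc2 : c.re * c.re + c.im * c.im = 1 := by
    rw [← Complex.normSq_apply, ← Complex.sq_norm, hc, one_pow]
  rw [Complex.div_re, ← add_div]
  simp only [Complex.sub_re, Complex.sub_im, Complex.add_re, Complex.add_im,
    Complex.one_re, Complex.one_im]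
  rw [div_eq_zero_iff]
  left
  linear_combination -hc2

def IntensityInjectiveModPhase {ι m : Type*} [Fintype m] (Φ : ι → m → ℂ) : Prop :=
  ∀ x y : m → ℂ, (∀ n, ‖star (Φ n) ⬝ᵥ x‖ ^ 2 = ‖star (Φ n) ⬝ᵥ y‖ ^ 2) →
    ∃ c : ℂ, ‖c‖ = 1 ∧ y = c • x

lemma IntensityInjectiveModPhase.exists_eq_real_mul_I_smul {ι m : Type*} [Fintype m]
    {Φ : ι → m → ℂ} (hΦ : IntensityInjectiveModPhase Φ) {θ : m → ℂ} (hθ : θ ≠ 0) {z : m → ℂ}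
    (hz : ∀ n, ((star (Φ n) ⬝ᵥ θ) * conj (star (Φ n) ⬝ᵥ z)).re = 0) :
    ∃ t : ℝ, z = (t * Complex.I) • θ := by
  obtain ⟨c, hc, hθz⟩ := hΦ (θ + z) (θ - z) fun n => by
    rw [dotProduct_add, dotProduct_sub]
    exact norm_add_sq_eq_norm_sub_sq (hz n)
  have hc1 : 1 + c ≠ 0 := by
    intro hc1
    apply hθ
    funext j
    have := congrFun hθz j
    rw [Pi.zero_apply]
    simp only [Pi.sub_apply, Pi.smul_apply, Pi.add_apply, smul_eq_mul] at this
    linear_combination (this + (θ j + z j) * hc1) / 2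
  set d := (1 - c) / (1 + c)
  have hd : (d.im * Complex.I : ℂ) = d :=
    Complex.ext (by simp [re_one_sub_div_one_add_eq_zero hc, d]) (by simp)
  refine ⟨d.im, funext fun j => ?_⟩
  have := congrFun hθz j
  simp only [Pi.sub_apply, Pi.smul_apply, Pi.add_apply, smul_eq_mul] at this ⊢
  rw [hd, div_mul_eq_mul_div, eq_div_iff hc1]
  linear_combination -this

lemma eq_zero_of_sum_mul_Psi_castLE_eq_zero {M N : ℕ} (hM : 0 < M) {Φ : Fin N → Fin M → ℂ}
    (hΦ : IntensityInjectiveModPhase Φ) {θ : Fin M → ℂ}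
    (him : (θ ⟨M - 1, Nat.sub_lt hM one_pos⟩).im = 0)
    (hre : 0 < (θ ⟨M - 1, Nat.sub_lt hM one_pos⟩).re) {x : Fin (2 * M - 1) → ℝ}
    (hx : ∀ n, ∑ i, x i * Psi Φ θ (Fin.castLE (Nat.sub_le _ _) i) n = 0) :
    x = 0 := by
  set e : Fin (2 * M - 1) → Fin (2 * M) := Fin.castLE (Nat.sub_le _ _)
  have he : Function.Injective e := Fin.castLE_injective _
  obtain ⟨z, hz⟩ := exists_realify_eq (Function.extend e x 0)
  have hθ : θ ≠ 0 := fun h => by simp [h] at hre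
  have horth (n : Fin N) : ((star (Φ n) ⬝ᵥ θ) * conj (star (Φ n) ⬝ᵥ z)).re = 0 := by
    rw [← realify_dotProduct_Psi, hz, ← hx n, dotProduct]
    refine (Fintype.sum_of_injective e he _ _ (fun i hi => ?_) fun i => ?_).symm
    · rw [Function.extend_apply' _ _ _ fun ⟨j, hj⟩ => hi ⟨j, hj⟩, Pi.zero_apply, zero_mul]
    · rw [he.extend_apply]
  obtain ⟨t, rfl⟩ := hΦ.exists_eq_real_mul_I_smul hθ horth
  have ht : t = 0 := by
    have hlast : Function.extend e x 0 ⟨2 * M - 1, by omega⟩ = 0 := by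
      refine Function.extend_apply' _ _ _ fun ⟨i, hi⟩ => ?_
      have := congrArg Fin.val hi
      simp only [e, Fin.val_castLE] at this
      omega
    rw [← hz, realify_last hM] at hlast
    simpa [him, hre.ne'] using hlast
  funext i
  simpa [ht, he.extend_apply] using (congrFun hz (e i)).symm

theorem stmt_19 (M N : ℕ) (hM : 0 < M) (Φ : Fin N → Fin M → ℂ)
    (hinj : ∀ x y : Fin M → ℂ,
        (∀ n, ‖star (Φ n) ⬝ᵥ x‖ ^ 2 = ‖star (Φ n) ⬝ᵥ y‖ ^ 2) →
        ∃ c : ℂ, ‖c‖ = 1 ∧ y = c • x)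
    (σ : ℝ) (hσ : 0 < σ) (θ : Fin M → ℂ)
    (him : (θ ⟨M - 1, by omega⟩).im = 0)
    (hre : 0 < (θ ⟨M - 1, by omega⟩).re) :
    Matrix.PosDef (Matrix.of fun i j : Fin (2 * M - 1) =>
      (4 / σ ^ 2) * ∑ n, Psi Φ θ (Fin.castLE (by omega) i) n *
        Psi Φ θ (Fin.castLE (by omega) j) n) := by
  set G : Matrix (Fin (2 * M - 1)) (Fin N) ℝ := of fun i n => Psi Φ θ (Fin.castLE (by omega) i) n
  have hG : Function.Injective G.vecMul :=
    (injective_iff_map_eq_zero G.vecMulLinear).2 fun x hx =>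
      eq_zero_of_sum_mul_Psi_castLE_eq_zero hM hinj him hre fun n => congrFun hx n
  have hJ : (of fun i j : Fin (2 * M - 1) => (4 / σ ^ 2) * ∑ n, G i n * G j n) =
      (4 / σ ^ 2) • (G * Gᴴ) := by
    ext i j
    simp [mul_apply]
  exact hJ ▸ (PosDef.mul_conjTranspose_self G hG).smul (by positivity)
end
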